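/- arXiv:2002.03849 — 2 statements merged into one kernel-verified Lean document; each statement's English description precedes it below -/
import Mathlib

section
/- For the Cauchy bridge midpoint density g with L > σT, the second derivative of g at x = L/2 is positive, so L/2 is a strict local minimum of g; i.e., the midpoint density undergoes a structural change (unimodal to bimodal) at the bifurcation length L_b = σT. -/
open Real Filter Topology

/-!
Put `s = σT/2`. The two Cauchy factors at time `T/2` combine into `g x = K / q (x - L/2)` with
`q u = (u² + L²/4 + s²)² - L²u² = u⁴ - B u² + C`, where `B = (L² - σ²T²)/2`. Hence `L > σT`
makes `u = 0` a nondegenerate local maximum of the positive quartic `q`, i.e. a strict local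
minimum of `g`, with `g''(L/2) = 2KB/C² > 0`.
-/

section Calculus

variable {𝕜 : Type*} [NontriviallyNormedField 𝕜] {p p' : 𝕜 → 𝕜} {p'' x₀ : 𝕜}

theorem hasDerivAt_deriv_const_div_of_deriv_eq_zero (K : 𝕜)
    (hp : ∀ᶠ x in 𝓝 x₀, HasDerivAt p (p' x) x) (hp' : HasDerivAt p' p'' x₀)
    (hp₀ : p x₀ ≠ 0) (hcrit : p' x₀ = 0) :
    HasDerivAt (deriv fun x => K / p x) (-(K * p'') / p x₀ ^ 2) x₀ := by
  have hne : ∀ᶠ x in 𝓝 x₀, p x ≠ 0 := hp.self_of_nhds.continuousAt.eventually_ne hp₀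
  have hderiv : deriv (fun x => K / p x) =ᶠ[𝓝 x₀] fun x => -(K * p' x) / p x ^ 2 := by
    filter_upwards [hp, hne] with x hx hx₀
    rw [((hasDerivAt_const x K).fun_div hx hx₀).deriv]
    ring
  refine HasDerivAt.congr_of_eventuallyEq ?_ hderiv
  refine ((hp'.const_mul K).neg.fun_div (hp.self_of_nhds.fun_pow 2)
    (pow_ne_zero 2 hp₀)).congr_deriv ?_
  rw [hcrit]
  field_simp
  ring

theorem deriv_deriv_comp_sub_const {F : Type*} [NormedAddCommGroup F] [NormedSpace 𝕜 F]
    (h : 𝕜 → F) (a x : 𝕜) :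
    deriv (deriv fun x => h (x - a)) x = deriv (deriv h) (x - a) := by
  simpa only [iteratedDeriv_succ, iteratedDeriv_zero] using
    congrFun (iteratedDeriv_comp_sub_const (n := 2) (f := h) (s := a)) x

end Calculus

def evenQuartic (B C u : ℝ) : ℝ := u ^ 4 - B * u ^ 2 + C

section EvenQuartic

variable {B C : ℝ}

theorem hasDerivAt_evenQuartic (B C u : ℝ) :
    HasDerivAt (evenQuartic B C) (4 * u ^ 3 - 2 * B * u) u :=
  (((hasDerivAt_pow 4 u).sub ((hasDerivAt_pow 2 u).const_mul B)).add_const C).congr_deriv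
    (by ring)

theorem deriv_deriv_const_div_evenQuartic_zero (K B : ℝ) (hC : C ≠ 0) :
    deriv (deriv fun u => K / evenQuartic B C u) 0 = 2 * K * B / C ^ 2 := by
  have hderiv₂ : HasDerivAt (fun u => 4 * u ^ 3 - 2 * B * u) (-2 * B) 0 :=
    (((hasDerivAt_pow 3 0).const_mul 4).sub ((hasDerivAt_id 0).const_mul (2 * B))).congr_deriv
      (by simp)
  rw [(hasDerivAt_deriv_const_div_of_deriv_eq_zero K
    (.of_forall (hasDerivAt_evenQuartic B C)) hderiv₂ (by simpa [evenQuartic]) (by simp)).deriv]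
  simp only [evenQuartic]
  ring

theorem evenQuartic_pos (h : B ^ 2 < 4 * C) (u : ℝ) : 0 < evenQuartic B C u := by
  unfold evenQuartic
  nlinarith [sq_nonneg (u ^ 2 - B / 2)]

theorem evenQuartic_lt_evenQuartic_zero {u : ℝ} (hu : u ≠ 0) (huB : u ^ 2 < B) :
    evenQuartic B C u < evenQuartic B C 0 := by
  have hu₂ : 0 < u ^ 2 := by positivity
  unfold evenQuartic
  nlinarith

theorem eventually_evenQuartic_lt_evenQuartic_zero (hB : 0 < B) :
    ∀ᶠ u in 𝓝[≠] 0, evenQuartic B C u < evenQuartic B C 0 := by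
  have hsmall : ∀ᶠ u in 𝓝 (0 : ℝ), u ^ 2 < B :=
    (continuous_pow 2).continuousAt.eventually_lt continuousAt_const (by simpa)
  filter_upwards [self_mem_nhdsWithin, nhdsWithin_le_nhds hsmall] with u hu hu_small
  exact evenQuartic_lt_evenQuartic_zero hu hu_small

end EvenQuartic

theorem mul_add_sq_sub_eq_evenQuartic (a L x : ℝ) :
    (x ^ 2 + a) * ((L - x) ^ 2 + a) =
      evenQuartic ((L ^ 2 - 4 * a) / 2) ((L ^ 2 / 4 + a) ^ 2) (x - L / 2) := by
  unfold evenQuartic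
  ring

/-- For `L > σT` the point `L/2` is a strict local minimum of the Cauchy
bridge midpoint density; specifically `g''(L/2) > 0` (bifurcation at `L_b = σT`). -/
theorem cauchy_bridge_midpoint_local_min (σ T L : ℝ) (hσ : 0 < σ) (hT : 0 < T)
    (hL : σ * T < L)
    (f : ℝ → ℝ → ℝ) (hf : ∀ x t, f x t = (σ * t / π) / (x ^ 2 + σ ^ 2 * t ^ 2))
    (g : ℝ → ℝ) (hg : ∀ x, g x = f x (T / 2) * f (L - x) (T / 2) / f L T) :
    0 < deriv (deriv g) (L / 2) ∧
      ∀ᶠ x in nhdsWithin (L / 2) {(L / 2)}ᶜ, g (L / 2) < g x := by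
  set s := σ * (T / 2)
  have hf_half (x : ℝ) : f x (T / 2) = (s / π) / (x ^ 2 + s ^ 2) := by rw [hf]; ring
  set K := (s / π) ^ 2 / f L T
  set B := (L ^ 2 - 4 * s ^ 2) / 2
  set C := (L ^ 2 / 4 + s ^ 2) ^ 2
  have hs : 0 < s := by positivity
  have hK : 0 < K := by simp only [K, hf]; positivity
  have hsL : 2 * s < L := by simp only [s]; linarith
  have hB : 0 < B := by simp only [B]; nlinarith
  have hC : 0 < C := by positivity
  have hBC : B ^ 2 < 4 * C := by
    simp only [B, C]
    nlinarith [pow_pos (mul_pos hs (show 0 < L by linarith)) 2]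
  set q := fun u => K / evenQuartic B C u
  have hg_eq : g = fun x => q (x - L / 2) := by
    funext x
    simp only [q, hg, hf_half, B, C, ← mul_add_sq_sub_eq_evenQuartic, K]
    field_simp
  refine ⟨?_, ?_⟩
  · rw [hg_eq, deriv_deriv_comp_sub_const, sub_self]
    simp only [q]
    rw [deriv_deriv_const_div_evenQuartic_zero _ _ hC.ne']
    positivity
  · have hq : ∀ᶠ u in 𝓝[≠] 0, q 0 < q u :=
      (eventually_evenQuartic_lt_evenQuartic_zero hB).mono fun u hu =>
        div_lt_div_of_pos_left hK (evenQuartic_pos hBC u) hu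
    have hshift : Tendsto (· - L / 2) (𝓝[≠] (L / 2)) (𝓝[≠] 0) := by
      rw [Tendsto, map_subRight_nhdsNE, sub_self]
    simpa only [hg_eq, sub_self] using hshift.eventually hq
end

section
/- For L with 0 ≤ L < σT, the Cauchy bridge midpoint density g has exactly one critical point on ℝ, located at x = L/2; for L > σT it has exactly three critical points, at L/2 and at [L ± √(L² − σ²T²)]/2. -/
open Real

/-!
Up to a positive constant, `g x = 1 / ((x² + b) ((L - x)² + b))` with `b = (σT/2)²`, so
`g' x` has the sign of `-(2x - L)(x² - Lx + b)`. The critical points are therefore `L/2`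
together with the real roots of `x² - Lx + b`, whose discriminant is `L² - σ²T²`.
-/

noncomputable def cauchyDensity (σ x t : ℝ) : ℝ :=
  (σ * t / π) / (x ^ 2 + σ ^ 2 * t ^ 2)

theorem cauchyDensity_bridge_eq {σ T : ℝ} (hσ : 0 < σ) (hT : 0 < T) (L x : ℝ) :
    cauchyDensity σ x (T / 2) * cauchyDensity σ (L - x) (T / 2) / cauchyDensity σ L T =
      σ * T * (L ^ 2 + σ ^ 2 * T ^ 2) / (4 * π) /
        ((x ^ 2 + (σ * T / 2) ^ 2) * ((L - x) ^ 2 + (σ * T / 2) ^ 2)) := by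
  have := pi_pos
  unfold cauchyDensity
  field_simp
  ring

theorem hasDerivAt_div_sq_add_mul_sq_add {b : ℝ} (hb : 0 < b) (c L x : ℝ) :
    HasDerivAt (fun x => c / ((x ^ 2 + b) * ((L - x) ^ 2 + b)))
      (-(2 * c * (2 * x - L) * (x ^ 2 - L * x + b)) / ((x ^ 2 + b) * ((L - x) ^ 2 + b)) ^ 2)
      x := by
  have hleft : HasDerivAt (fun x : ℝ => x ^ 2 + b) (2 * x) x := by
    simpa using (hasDerivAt_pow 2 x).add_const b
  have hright : HasDerivAt (fun x : ℝ => (L - x) ^ 2 + b) (-(2 * (L - x))) x := by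
    simpa using (((hasDerivAt_id x).const_sub L).pow 2).add_const b
  have hden : (x ^ 2 + b) * ((L - x) ^ 2 + b) ≠ 0 := by positivity
  exact ((hasDerivAt_const x c).div (hleft.mul hright) hden).congr_deriv (by
    simp only [Pi.mul_apply]; ring)

theorem deriv_div_sq_add_mul_sq_add_eq_zero_iff {b c : ℝ} (hb : 0 < b) (hc : c ≠ 0) (L x : ℝ) :
    deriv (fun x => c / ((x ^ 2 + b) * ((L - x) ^ 2 + b))) x = 0 ↔
      x = L / 2 ∨ x ^ 2 - L * x + b = 0 := by
  have hden : ((x ^ 2 + b) * ((L - x) ^ 2 + b)) ^ 2 ≠ 0 := by positivity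
  rw [(hasDerivAt_div_sq_add_mul_sq_add hb c L x).deriv, div_eq_zero_iff, or_iff_left hden,
    neg_eq_zero]
  simp only [mul_eq_zero, OfNat.ofNat_ne_zero, hc, false_or, sub_eq_zero]
  rw [eq_div_iff two_ne_zero, mul_comm]

theorem sq_sub_mul_add_ne_zero {L b : ℝ} (h : L ^ 2 < 4 * b) (x : ℝ) :
    x ^ 2 - L * x + b ≠ 0 := by
  nlinarith [sq_nonneg (2 * x - L)]

theorem sq_sub_mul_add_eq_zero_iff {L b d : ℝ} (hd : 0 ≤ d) (hb : 4 * b = L ^ 2 - d) (x : ℝ) :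
    x ^ 2 - L * x + b = 0 ↔ x = (L - √d) / 2 ∨ x = (L + √d) / 2 := by
  have hfactor : x ^ 2 - L * x + b = (x - (L - √d) / 2) * (x - (L + √d) / 2) := by
    linear_combination hb / 4 + sq_sqrt hd / 4
  rw [hfactor, mul_eq_zero, sub_eq_zero, sub_eq_zero]

/-- Critical-point structure of the Cauchy bridge midpoint density: a unique
critical point at `L/2` for `0 ≤ L < σT`, and exactly three critical points
`L/2`, `(L ± √(L² − σ²T²))/2` for `L > σT`. -/
theorem cauchy_bridge_critical_points (σ T L : ℝ) (hσ : 0 < σ) (hT : 0 < T)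
    (hL0 : 0 ≤ L)
    (f : ℝ → ℝ → ℝ) (hf : ∀ x t, f x t = (σ * t / π) / (x ^ 2 + σ ^ 2 * t ^ 2))
    (g : ℝ → ℝ) (hg : ∀ x, g x = f x (T / 2) * f (L - x) (T / 2) / f L T) :
    (L < σ * T → ∀ x : ℝ, deriv g x = 0 ↔ x = L / 2) ∧
    (σ * T < L → ∀ x : ℝ, deriv g x = 0 ↔
      x = L / 2 ∨ x = (L - Real.sqrt (L ^ 2 - σ ^ 2 * T ^ 2)) / 2
        ∨ x = (L + Real.sqrt (L ^ 2 - σ ^ 2 * T ^ 2)) / 2) := by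
  obtain rfl : f = cauchyDensity σ := funext fun x => funext (hf x)
  obtain rfl : g = fun x => σ * T * (L ^ 2 + σ ^ 2 * T ^ 2) / (4 * π) /
      ((x ^ 2 + (σ * T / 2) ^ 2) * ((L - x) ^ 2 + (σ * T / 2) ^ 2)) :=
    funext fun x => (hg x).trans (cauchyDensity_bridge_eq hσ hT L x)
  have hσT : 0 < σ * T := mul_pos hσ hT
  have hcrit := deriv_div_sq_add_mul_sq_add_eq_zero_iff (b := (σ * T / 2) ^ 2) (by positivity)
    (c := σ * T * (L ^ 2 + σ ^ 2 * T ^ 2) / (4 * π)) (by positivity) L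
  refine ⟨fun hLσT x => ?_, fun hσTL x => ?_⟩
  · rw [hcrit, or_iff_left (sq_sub_mul_add_ne_zero (by nlinarith) x)]
  · rw [hcrit, sq_sub_mul_add_eq_zero_iff (d := L ^ 2 - σ ^ 2 * T ^ 2) (by nlinarith) (by ring) x]
end
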